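/- arXiv:2303.08816 — 3 statements merged into one kernel-verified Lean document; each statement's English description precedes it below -/
import Mathlib

section
/- In the hard instance construction, the Borda score of item i equals 5/8 + (1/2)⟨bit(i), θ⟩ when i < 2^d, and equals 3/8 when i ≥ 2^d. -/
open Finset

/- Split the Borda average into the halves `j < 2^d` and `j ≥ 2^d`. For `i < 2^d` both halves are
constant in `j`. For `i ≥ 2^d` the upper half is constant and the lower one carries `-⟨bit j, θ⟩`,
which averages to zero: flipping bit `k` is an involution of `range (2^d)` that swaps the signs of
the `k`-th coordinate of `bit j`. -/

theorem sum_range_two_pow_ite_testBit {M : Type*} [AddCommGroup M] {d k : ℕ} (hk : k < d)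
    (a : M) : ∑ j ∈ range (2 ^ d), (if j.testBit k then a else -a) = 0 := by
  have testBit_flip (j : ℕ) : (j ^^^ 2 ^ k).testBit k = !j.testBit k := by simp
  refine sum_involution (fun j _ => j ^^^ 2 ^ k) (fun j _ => ?_) (fun j _ _ => ?_)
    (fun j hj => ?_) (fun j _ => by simp)
  · cases h : j.testBit k <;> simp [testBit_flip, h]
  · intro hfix
    simpa [hfix] using testBit_flip j
  · exact mem_range.2 <| Nat.xor_lt_two_pow (mem_range.1 hj) (Nat.pow_lt_pow_right one_lt_two hk)

theorem sum_range_two_pow_sum_signed_bits_mul {R : Type*} [Ring R] {d : ℕ} (θ : Fin d → R) :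
    ∑ j ∈ range (2 ^ d), ∑ k : Fin d, (if j.testBit k then (1 : R) else -1) * θ k = 0 := by
  rw [sum_comm]
  refine sum_eq_zero fun k _ => ?_
  rw [← sum_mul, sum_range_two_pow_ite_testBit k.isLt, zero_mul]

theorem mean_range_two_pow_succ (d : ℕ) (f : ℕ → ℝ) :
    1 / 2 ^ (d + 1) * ∑ j ∈ range (2 ^ (d + 1)), f j =
      1 / 2 * (1 / 2 ^ d * ∑ j ∈ range (2 ^ d), f j
        + 1 / 2 ^ d * ∑ j ∈ range (2 ^ d), f (2 ^ d + j)) := by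
  rw [show 2 ^ (d + 1) = 2 ^ d + 2 ^ d by ring, sum_range_add]
  field_simp
  ring

theorem mean_range_two_pow_const (d : ℕ) (c : ℝ) : 1 / 2 ^ d * ∑ _j ∈ range (2 ^ d), c = c := by
  simp

theorem hard_instance_borda_scores_general (d : ℕ) (θ : Fin d → ℝ)
    (bit : ℕ → Fin d → ℝ)
    (hbit : ∀ x k, bit x k = if Nat.testBit x (k : ℕ) then 1 else -1)
    (p : ℕ → ℕ → ℝ)
    (hp : ∀ i j, p i j =
      if i < 2 ^ d ∧ j < 2 ^ d then 1 / 2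
      else if 2 ^ d ≤ i ∧ 2 ^ d ≤ j then 1 / 2
      else if i < 2 ^ d then 3 / 4 + ∑ k, bit i k * θ k
      else 1 / 4 - ∑ k, bit j k * θ k)
    (B : ℕ → ℝ)
    (hB : ∀ i, B i = (1 / (2 ^ (d + 1) : ℝ)) * ∑ j ∈ Finset.range (2 ^ (d + 1)), p i j) :
    ∀ i < 2 ^ (d + 1),
      (i < 2 ^ d → B i = 5 / 8 + (1 / 2) * ∑ k, bit i k * θ k) ∧
      (2 ^ d ≤ i → B i = 3 / 8) := by
  intro i _
  rw [hB, mean_range_two_pow_succ]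
  constructor
  · intro hi
    have lower : ∀ j ∈ range (2 ^ d), p i j = 1 / 2 := fun j hj => by
      rw [hp, if_pos ⟨hi, mem_range.1 hj⟩]
    have upper : ∀ j ∈ range (2 ^ d), p i (2 ^ d + j) = 3 / 4 + ∑ k, bit i k * θ k :=
      fun j _ => by rw [hp, if_neg (by omega), if_neg (by omega), if_pos hi]
    rw [sum_congr rfl lower, sum_congr rfl upper, mean_range_two_pow_const,
      mean_range_two_pow_const]
    ring
  · intro hi
    have lower : ∀ j ∈ range (2 ^ d), p i j = 1 / 4 - ∑ k, bit j k * θ k := fun j hj => by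
      have hj_lt := mem_range.1 hj
      rw [hp, if_neg (by omega), if_neg (by omega), if_neg (by omega)]
    have upper : ∀ j ∈ range (2 ^ d), p i (2 ^ d + j) = 1 / 2 := fun j _ => by
      rw [hp, if_neg (by omega), if_pos ⟨hi, by omega⟩]
    have cancel : ∑ j ∈ range (2 ^ d), ∑ k, bit j k * θ k = 0 := by
      simp_rw [hbit]
      exact sum_range_two_pow_sum_signed_bits_mul θ
    rw [sum_congr rfl lower, sum_congr rfl upper, sum_sub_distrib, cancel, sub_zero,
      mean_range_two_pow_const, mean_range_two_pow_const]
    norm_num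

theorem hard_instance_borda_scores (d : ℕ) (hd : 1 ≤ d) (Δ : ℝ) (θ : Fin d → ℝ)
    (hθ : ∀ k, θ k = Δ ∨ θ k = -Δ)
    (bit : ℕ → Fin d → ℝ)
    (hbit : ∀ x k, bit x k = if Nat.testBit x (k : ℕ) then 1 else -1)
    (p : ℕ → ℕ → ℝ)
    (hp : ∀ i j, p i j =
      if i < 2 ^ d ∧ j < 2 ^ d then 1 / 2
      else if 2 ^ d ≤ i ∧ 2 ^ d ≤ j then 1 / 2
      else if i < 2 ^ d then 3 / 4 + ∑ k, bit i k * θ k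
      else 1 / 4 - ∑ k, bit j k * θ k)
    (B : ℕ → ℝ)
    (hB : ∀ i, B i = (1 / (2 ^ (d + 1) : ℝ)) * ∑ j ∈ Finset.range (2 ^ (d + 1)), p i j) :
    ∀ i < 2 ^ (d + 1),
      (i < 2 ^ d → B i = 5 / 8 + (1 / 2) * ∑ k, bit i k * θ k) ∧
      (2 ^ d ≤ i → B i = 3 / 8) :=
  hard_instance_borda_scores_general d θ bit hbit p hp B hB
end

section
/- In the hard instance, the unique Borda winner among all items is the item i* < 2^d with bit(i*) = sign(θ), where sign(θ)_k = 1 if θ_k = Δ and -1 if θ_k = -Δ, and its Borda score is 5/8 + dΔ/2. -/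
/-!
Write `θ k = ±Δ` as the sign pattern `c : Fin d → Bool`. Each term `bit i k * θ k` is `Δ` if
bit `k` of `i` agrees with `c k` and `-Δ` otherwise, so among the items `i < 2^d` the score is
maximal, equal to `5/8 + dΔ/2`, exactly at the unique `i* < 2^d` whose low `d` bits are `c`;
every other such item loses at least `Δ`. The remaining items score `3/8 < 5/8`.
-/

theorem Nat.existsUnique_lt_two_pow_testBit_eq {d : ℕ} (p : Fin d → Bool) :
    ∃! x : ℕ, x < 2 ^ d ∧ ∀ k : Fin d, x.testBit k = p k := by
  have testBit_ofFnLE (k : ℕ) :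
      (BitVec.ofFnLE p).toNat.testBit k = if h : k < d then p ⟨k, h⟩ else false :=
    BitVec.getLsbD_ofFnLE p k
  refine ⟨_, ⟨BitVec.isLt _, fun k => by rw [testBit_ofFnLE, dif_pos k.isLt]⟩, ?_⟩
  rintro y ⟨hy, hyp⟩
  refine Nat.eq_of_testBit_eq fun k => ?_
  rw [testBit_ofFnLE]
  split_ifs with hk
  · exact hyp ⟨k, hk⟩
  · exact Nat.testBit_lt_two_pow (hy.trans_le (Nat.pow_le_pow_right two_pos (not_lt.1 hk)))

theorem Finset.sum_ite_eq_lt_card_mul {ι : Type*} [Fintype ι] {b c : ι → Bool} (hbc : b ≠ c)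
    {Δ : ℝ} (hΔ : 0 < Δ) :
    ∑ k, (if b k = c k then Δ else -Δ) < Fintype.card ι * Δ := by
  obtain ⟨k, hk⟩ := Function.ne_iff.1 hbc
  calc ∑ k, (if b k = c k then Δ else -Δ) < ∑ _k : ι, Δ :=
        Finset.sum_lt_sum (fun j _ => by split_ifs <;> linarith)
          ⟨k, Finset.mem_univ k, by simp [hk, hΔ]⟩
    _ = Fintype.card ι * Δ := by simp

theorem sign_mul_sign (a b : Bool) (Δ : ℝ) :
    (if a then 1 else -1 : ℝ) * (if b then Δ else -Δ) = if a = b then Δ else -Δ := by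
  cases a <;> cases b <;> simp

theorem hard_instance_unique_winner_general (d : ℕ) (Δ : ℝ) (hΔ : 0 < Δ)
    (θ : Fin d → ℝ)
    (hθ : ∀ k, θ k = Δ ∨ θ k = -Δ)
    (bit : ℕ → Fin d → ℝ)
    (hbit : ∀ x k, bit x k = if Nat.testBit x (k : ℕ) then 1 else -1)
    (sign : Fin d → ℝ)
    (hsign : ∀ k, sign k = if θ k = Δ then 1 else -1)
    (B : ℕ → ℝ)
    (hB : ∀ i, B i = if i < 2 ^ d then 5 / 8 + (1 / 2) * ∑ k, bit i k * θ k else 3 / 8) :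
    ∃! istar : ℕ, istar < 2 ^ (d + 1) ∧
      (istar < 2 ^ d ∧ (∀ k, bit istar k = sign k) ∧
        B istar = 5 / 8 + (d : ℝ) * Δ / 2 ∧
        ∀ i < 2 ^ (d + 1), i ≠ istar → B i < B istar) := by
  set c : Fin d → Bool := fun k => decide (θ k = Δ)
  have hθc (k : Fin d) : θ k = if c k then Δ else -Δ := by
    by_cases h : θ k = Δ
    · simp [c, h]
    · simp [c, (hθ k).resolve_left h]
  have hscore (i : ℕ) (hi : i < 2 ^ d) :
      B i = 5 / 8 + 1 / 2 * ∑ k : Fin d, if i.testBit k = c k then Δ else -Δ := by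
    simp only [hB, if_pos hi, hbit, hθc, sign_mul_sign]
  obtain ⟨istar, ⟨hlt, hbits⟩, huniq⟩ := Nat.existsUnique_lt_two_pow_testBit_eq c
  have hBstar : B istar = 5 / 8 + d * Δ / 2 := by
    rw [hscore istar hlt]
    simp only [hbits, ↓reduceIte, Finset.sum_const, Finset.card_univ, Fintype.card_fin,
      nsmul_eq_mul]
    ring
  have hmax : ∀ i < 2 ^ (d + 1), i ≠ istar → B i < B istar := by
    intro i _ hne
    by_cases hi : i < 2 ^ d
    · have hbits_ne : (fun k : Fin d => i.testBit k) ≠ c :=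
        fun h => hne (huniq i ⟨hi, congrFun h⟩)
      have := Finset.sum_ite_eq_lt_card_mul hbits_ne hΔ
      rw [Fintype.card_fin] at this
      rw [hscore i hi, hBstar]
      linarith
    · rw [hB, if_neg hi, hBstar]
      have : 0 ≤ (d : ℝ) * Δ := by positivity
      linarith
  have hlt_succ : istar < 2 ^ (d + 1) := hlt.trans (Nat.pow_lt_pow_right one_lt_two d.lt_succ_self)
  refine ⟨istar, ⟨hlt_succ, hlt, fun k => by simp [hbit, hsign, hbits, c], hBstar, hmax⟩, ?_⟩
  rintro j ⟨hj, -, -, -, hjmax⟩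
  by_contra hne
  exact (hmax j hj hne).asymm (hjmax istar hlt_succ (Ne.symm hne))

theorem hard_instance_unique_winner (d : ℕ) (hd : 1 ≤ d) (Δ : ℝ) (hΔ : 0 < Δ)
    (hdΔ : (d : ℝ) * Δ ≤ 1 / 8) (θ : Fin d → ℝ)
    (hθ : ∀ k, θ k = Δ ∨ θ k = -Δ)
    (bit : ℕ → Fin d → ℝ)
    (hbit : ∀ x k, bit x k = if Nat.testBit x (k : ℕ) then 1 else -1)
    (sign : Fin d → ℝ)
    (hsign : ∀ k, sign k = if θ k = Δ then 1 else -1)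
    (B : ℕ → ℝ)
    (hB : ∀ i, B i = if i < 2 ^ d then 5 / 8 + (1 / 2) * ∑ k, bit i k * θ k else 3 / 8) :
    ∃! istar : ℕ, istar < 2 ^ (d + 1) ∧
      (istar < 2 ^ d ∧ (∀ k, bit istar k = sign k) ∧
        B istar = 5 / 8 + (d : ℝ) * Δ / 2 ∧
        ∀ i < 2 ^ (d + 1), i ≠ istar → B i < B istar) :=
  hard_instance_unique_winner_general d Δ hΔ θ hθ bit hbit sign hsign B hB
end

section
/- In the BEXP3 algorithm, with q_t(i) ≥ γ/K for all i and Σ := (1/K²) Σ_{i,j} φ_{i,j}φ_{i,j}^⊤ having minimum eigenvalue at least λ₀ > 0, the score estimate satisfies |B̂_t(i)| ≤ λ₀^{-1}/γ² for all i. -/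
/-!
Every weight `q i * q j` is at least `(γ/K)²`, so the design matrix `Q` dominates `γ² Σ` in the
Loewner order and `x ⬝ᵥ Q *ᵥ x ≥ γ² λ₀ ‖x‖²`. A matrix this coercive is invertible with
`‖Q⁻¹ y‖ ≤ ‖y‖ / (γ² λ₀)`, and the feedback vector `r φ` lies in the unit ball. Since `B̂(i)` pairs
`θ̂` with an average of unit-ball vectors, Cauchy–Schwarz gives `|B̂(i)| ≤ 1 / (γ² λ₀)`.
-/

open Matrix Finset

section DotProduct

variable {n R : Type*} [Fintype n]

lemma dotProduct_vecMulVec_self_mulVec [CommSemiring R] (v x : n → R) :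
    x ⬝ᵥ vecMulVec v v *ᵥ x = (v ⬝ᵥ x) ^ 2 := by
  rw [vecMulVec_mulVec, op_smul_eq_smul, dotProduct_smul, smul_eq_mul, dotProduct_comm, sq]

section OrderedCommRing

variable [CommRing R] [LinearOrder R] [IsStrictOrderedRing R]

lemma dotProduct_self_nonneg (x : n → R) : 0 ≤ x ⬝ᵥ x :=
  sum_nonneg fun i _ => mul_self_nonneg (x i)

lemma dotProduct_sq_le_dotProduct_self_mul (x y : n → R) :
    (x ⬝ᵥ y) ^ 2 ≤ (x ⬝ᵥ x) * (y ⬝ᵥ y) := by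
  simpa only [dotProduct, sq] using sum_mul_sq_le_sq_mul_sq univ x y

lemma dotProduct_le_one_of_dotProduct_self_le_one {x y : n → R} (hx : x ⬝ᵥ x ≤ 1)
    (hy : y ⬝ᵥ y ≤ 1) : x ⬝ᵥ y ≤ 1 := by
  have hsq : (x ⬝ᵥ y) ^ 2 ≤ 1 := calc
    (x ⬝ᵥ y) ^ 2 ≤ (x ⬝ᵥ x) * (y ⬝ᵥ y) := dotProduct_sq_le_dotProduct_self_mul x y
    _ ≤ 1 * 1 := mul_le_mul hx hy (dotProduct_self_nonneg y) zero_le_one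
    _ = 1 := one_mul 1
  exact (le_abs_self _).trans (abs_le_of_sq_le_sq (by rwa [one_pow]) zero_le_one)

lemma dotProduct_self_sum_le_card_sq {ι : Type*} (s : Finset ι) (v : ι → n → R)
    (hv : ∀ i ∈ s, v i ⬝ᵥ v i ≤ 1) :
    (∑ i ∈ s, v i) ⬝ᵥ (∑ i ∈ s, v i) ≤ (#s : R) ^ 2 := calc
  (∑ i ∈ s, v i) ⬝ᵥ (∑ i ∈ s, v i) = ∑ i ∈ s, ∑ j ∈ s, v i ⬝ᵥ v j := by
    rw [sum_dotProduct]
    simp only [dotProduct_sum]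
  _ ≤ ∑ _i ∈ s, ∑ _j ∈ s, (1 : R) := by
    gcongr with i hi j hj
    exact dotProduct_le_one_of_dotProduct_self_le_one (hv i hi) (hv j hj)
  _ = (#s : R) ^ 2 := by simp [sq]

lemma sq_mul_sum_sq_le_dotProduct_sum_smul_vecMulVec_mulVec {ι : Type*} [Fintype ι] {a : R}
    (ha : 0 ≤ a) (q : ι → R) (hq : ∀ i, a ≤ q i) (φ : ι → ι → n → R) (x : n → R) :
    a ^ 2 * ∑ i, ∑ j, (φ i j ⬝ᵥ x) ^ 2
      ≤ x ⬝ᵥ (∑ i, ∑ j, (q i * q j) • vecMulVec (φ i j) (φ i j)) *ᵥ x := by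
  simp only [sum_mulVec, dotProduct_sum, smul_mulVec, dotProduct_smul,
    dotProduct_vecMulVec_self_mulVec, smul_eq_mul, mul_sum]
  gcongr with i _ j _
  rw [sq]
  exact mul_le_mul (hq i) (hq j) ha (ha.trans (hq i))

end OrderedCommRing

section OrderedField

variable [Field R] [LinearOrder R] [IsStrictOrderedRing R]

lemma dotProduct_self_average_le_one {ι : Type*} [Fintype ι] (v : ι → n → R)
    (hv : ∀ i, v i ⬝ᵥ v i ≤ 1) :
    ((1 / (Fintype.card ι : R)) • ∑ i, v i) ⬝ᵥ ((1 / (Fintype.card ι : R)) • ∑ i, v i) ≤ 1 := by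
  rw [smul_dotProduct, dotProduct_smul, smul_eq_mul, smul_eq_mul, ← mul_assoc]
  rcases eq_or_ne (Fintype.card ι : R) 0 with hcard | hcard
  · simp [hcard]
  calc 1 / (Fintype.card ι : R) * (1 / Fintype.card ι) * ((∑ i, v i) ⬝ᵥ ∑ i, v i)
      ≤ 1 / (Fintype.card ι : R) * (1 / Fintype.card ι) * (Fintype.card ι : R) ^ 2 := by
        gcongr
        exact dotProduct_self_sum_le_card_sq univ v fun i _ => hv i
    _ = 1 := by field_simp

variable [DecidableEq n]

lemma isUnit_of_forall_mul_dotProduct_self_le {Q : Matrix n n R} {c : R} (hc : 0 < c)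
    (hQ : ∀ x, c * (x ⬝ᵥ x) ≤ x ⬝ᵥ Q *ᵥ x) : IsUnit Q := by
  rw [← mulVec_injective_iff_isUnit]
  intro x y hxy
  have hle := hQ (x - y)
  rw [mulVec_sub, hxy, sub_self, dotProduct_zero] at hle
  have hzero : (x - y) ⬝ᵥ (x - y) = 0 :=
    le_antisymm (nonpos_of_mul_nonpos_right hle hc) (dotProduct_self_nonneg _)
  exact sub_eq_zero.mp (dotProduct_self_eq_zero.mp hzero)

lemma sq_mul_dotProduct_self_inv_mulVec_le {Q : Matrix n n R} {c : R} (hc : 0 < c)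
    (hQ : ∀ x, c * (x ⬝ᵥ x) ≤ x ⬝ᵥ Q *ᵥ x) (y : n → R) :
    c ^ 2 * ((Q⁻¹ *ᵥ y) ⬝ᵥ (Q⁻¹ *ᵥ y)) ≤ y ⬝ᵥ y := by
  set θ := Q⁻¹ *ᵥ y
  have hQθ : Q *ᵥ θ = y := by
    rw [mulVec_mulVec, mul_nonsing_inv _ ((isUnit_iff_isUnit_det Q).mp
      (isUnit_of_forall_mul_dotProduct_self_le hc hQ)), one_mulVec]
  rcases (dotProduct_self_nonneg θ).eq_or_lt with hθ | hθ
  · rw [← hθ, mul_zero]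
    exact dotProduct_self_nonneg y
  refine le_of_mul_le_mul_left ?_ hθ
  calc θ ⬝ᵥ θ * (c ^ 2 * (θ ⬝ᵥ θ)) = (c * (θ ⬝ᵥ θ)) ^ 2 := by ring
    _ ≤ (θ ⬝ᵥ y) ^ 2 := by
      gcongr
      exact hQθ ▸ hQ θ
    _ ≤ θ ⬝ᵥ θ * (y ⬝ᵥ y) := dotProduct_sq_le_dotProduct_self_mul θ y

end OrderedField

end DotProduct

theorem bexp3_estimate_bound_general (d K : ℕ) (γ lam0 : ℝ)
    (hγ : 0 < γ) (hlam0 : 0 < lam0)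
    (q : Fin K → ℝ) (hq : ∀ i, γ / K ≤ q i)
    (φ : Fin K → Fin K → Fin d → ℝ) (hφ : ∀ i j, φ i j ⬝ᵥ φ i j ≤ 1)
    (Sm : Matrix (Fin d) (Fin d) ℝ)
    (hSm : Sm = (1 / (K : ℝ) ^ 2) • ∑ i, ∑ j, Matrix.vecMulVec (φ i j) (φ i j))
    (hSmin : ∀ x : Fin d → ℝ, lam0 * (x ⬝ᵥ x) ≤ x ⬝ᵥ Sm *ᵥ x)
    (Q : Matrix (Fin d) (Fin d) ℝ)
    (hQ : Q = ∑ i, ∑ j, (q i * q j) • Matrix.vecMulVec (φ i j) (φ i j))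
    (it jt : Fin K) (r : ℝ) (hr0 : 0 ≤ r) (hr1 : r ≤ 1)
    (θhat : Fin d → ℝ) (hθhat : θhat = Q⁻¹ *ᵥ (r • φ it jt))
    (Bhat : Fin K → ℝ)
    (hBhat : ∀ i, Bhat i = ((1 / (K : ℝ)) • ∑ j, φ i j) ⬝ᵥ θhat) :
    ∀ i, |Bhat i| ≤ lam0⁻¹ / γ ^ 2 := by
  set c := γ ^ 2 * lam0
  have hc : 0 < c := by positivity
  have hQ_coercive : ∀ x, c * (x ⬝ᵥ x) ≤ x ⬝ᵥ Q *ᵥ x := fun x => calc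
    c * (x ⬝ᵥ x) ≤ γ ^ 2 * (x ⬝ᵥ Sm *ᵥ x) := by rw [mul_assoc]; gcongr; exact hSmin x
    _ = (γ / K) ^ 2 * ∑ i, ∑ j, (φ i j ⬝ᵥ x) ^ 2 := by
      simp only [hSm, smul_mulVec, dotProduct_smul, sum_mulVec, dotProduct_sum,
        dotProduct_vecMulVec_self_mulVec, smul_eq_mul]
      ring
    _ ≤ x ⬝ᵥ Q *ᵥ x :=
      hQ ▸ sq_mul_sum_sq_le_dotProduct_sum_smul_vecMulVec_mulVec (by positivity) q hq φ x
  have hfeedback : (r • φ it jt) ⬝ᵥ (r • φ it jt) ≤ 1 := by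
    rw [smul_dotProduct, dotProduct_smul, smul_eq_mul, smul_eq_mul]
    exact mul_le_one₀ hr1 (mul_nonneg hr0 (dotProduct_self_nonneg _))
      (mul_le_one₀ hr1 (dotProduct_self_nonneg _) (hφ it jt))
  have hθ : θhat ⬝ᵥ θhat ≤ (1 / c) ^ 2 := by
    rw [div_pow, one_pow, le_div_iff₀ (by positivity), mul_comm, hθhat]
    exact (sq_mul_dotProduct_self_inv_mulVec_le hc hQ_coercive _).trans hfeedback
  intro i
  have hscore : (Bhat i) ^ 2 ≤ (1 / c) ^ 2 := calc
    (Bhat i) ^ 2 ≤ (((1 / (K : ℝ)) • ∑ j, φ i j) ⬝ᵥ ((1 / (K : ℝ)) • ∑ j, φ i j)) *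
        (θhat ⬝ᵥ θhat) := hBhat i ▸ dotProduct_sq_le_dotProduct_self_mul _ _
    _ ≤ 1 * (1 / c) ^ 2 := by
      refine mul_le_mul ?_ hθ (dotProduct_self_nonneg _) zero_le_one
      simpa only [Fintype.card_fin] using dotProduct_self_average_le_one (φ i) (hφ i)
    _ = (1 / c) ^ 2 := one_mul _
  calc |Bhat i| ≤ 1 / c := abs_le_of_sq_le_sq hscore (by positivity)
    _ = lam0⁻¹ / γ ^ 2 := by ring

theorem bexp3_estimate_bound (d K : ℕ) (hK : 1 ≤ K) (γ lam0 : ℝ)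
    (hγ : 0 < γ) (hlam0 : 0 < lam0)
    (q : Fin K → ℝ) (hq : ∀ i, γ / K ≤ q i) (hqsum : ∑ i, q i = 1)
    (φ : Fin K → Fin K → Fin d → ℝ) (hφ : ∀ i j, φ i j ⬝ᵥ φ i j ≤ 1)
    (Sm : Matrix (Fin d) (Fin d) ℝ)
    (hSm : Sm = (1 / (K : ℝ) ^ 2) • ∑ i, ∑ j, Matrix.vecMulVec (φ i j) (φ i j))
    (hSmin : ∀ x : Fin d → ℝ, lam0 * (x ⬝ᵥ x) ≤ x ⬝ᵥ Sm *ᵥ x)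
    (Q : Matrix (Fin d) (Fin d) ℝ)
    (hQ : Q = ∑ i, ∑ j, (q i * q j) • Matrix.vecMulVec (φ i j) (φ i j))
    (it jt : Fin K) (r : ℝ) (hr0 : 0 ≤ r) (hr1 : r ≤ 1)
    (θhat : Fin d → ℝ) (hθhat : θhat = Q⁻¹ *ᵥ (r • φ it jt))
    (Bhat : Fin K → ℝ)
    (hBhat : ∀ i, Bhat i = ((1 / (K : ℝ)) • ∑ j, φ i j) ⬝ᵥ θhat) :
    ∀ i, |Bhat i| ≤ lam0⁻¹ / γ ^ 2 :=
  bexp3_estimate_bound_general d K γ lam0 hγ hlam0 q hq φ hφ Sm hSm hSmin Q hQ it jt r hr0 hr1 θhat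
    hθhat Bhat hBhat
end
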